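/- arXiv:1303.1350 — 2 statements merged into one kernel-verified Lean document; each statement's English description precedes it below -/
import Mathlib

section
/- Let {c_n}_{n≥0} be a convex null sequence with c_0 = 2 and define F(z) = z + Σ_{n≥2} (1/n)(1 + Σ_{j=1}^{n-1} c_j) z^n. Then Re((1 - z) F'(z)) > 0 for all z in the unit disk. -/
/-!
Put `eₖ = cₖ - 2cₖ₊₁ + cₖ₊₂ ≥ 0`. Two summations by parts turn
`(1 - z) F'(z) = c₀/2 + ∑_{n≥1} cₙ zⁿ` into `∑ₖ eₖ Gₖ(z)` with Fejér-type polynomials `Gₖ`;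
the boundary terms vanish because `n (cₙ - cₙ₊₁) → 0` for a convex null sequence.
On the unit circle `2 Re Gₖ = |1 + z + ⋯ + zᵏ|²`, so `Re Gₖ > 0` in the disk by the minimum
principle, and `c₀ = 2` forces some `eₖ` to be positive.
-/

open Complex ComplexConjugate Metric Filter Finset Topology

/-- `Gₖ(z) = (k+1)/2 + ∑_{n=1}^{k} (k+1-n) zⁿ`, written as `∑_{m ≤ k} (1 + z + ⋯ + zᵐ - 1/2)`. -/
noncomputable def fejer (k : ℕ) (z : ℂ) : ℂ :=
  ∑ m ∈ range (k + 1), (∑ n ∈ range (m + 1), z ^ n - 1 / 2)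

lemma fejer_succ (k : ℕ) (z : ℂ) :
    fejer (k + 1) z = fejer k z + (∑ n ∈ range (k + 2), z ^ n - 1 / 2) :=
  sum_range_succ _ _

lemma fejer_zero_right (k : ℕ) : fejer k 0 = (k + 1) / 2 := by
  simp only [fejer, zero_geom_sum, Nat.add_eq_zero_iff, one_ne_zero, and_false, ↓reduceIte,
    sum_const, card_range, nsmul_eq_mul]
  push_cast
  ring

lemma differentiable_fejer (k : ℕ) : Differentiable ℂ (fejer k) := by
  unfold fejer
  fun_prop

lemma conj_fejer (k : ℕ) (z : ℂ) : conj (fejer k z) = fejer k (conj z) := by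
  simp [fejer, map_ofNat]

lemma pow_succ_mul_geom_sum_inv {z : ℂ} (hz : z ≠ 0) (k : ℕ) :
    z ^ (k + 1) * ∑ n ∈ range (k + 1), z⁻¹ ^ n = z * ∑ n ∈ range (k + 1), z ^ n := by
  rw [mul_sum, mul_sum, ← sum_range_reflect]
  refine sum_congr rfl fun n hn => ?_
  have hnk : n ≤ k := Nat.lt_succ_iff.1 (mem_range.1 hn)
  rw [show k + 1 - 1 - n = k - n by omega,
    show z ^ (k + 1) = z * z ^ n * z ^ (k - n) by
      rw [mul_assoc, ← pow_add, ← pow_succ']; congr 1; omega,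
    mul_assoc, ← mul_pow, mul_inv_cancel₀ hz, one_pow, mul_one]

lemma geom_sum_mul_geom_sum_inv {z : ℂ} (hz : z ≠ 0) (k : ℕ) :
    (∑ n ∈ range (k + 1), z ^ n) * ∑ n ∈ range (k + 1), z⁻¹ ^ n = fejer k z + fejer k z⁻¹ := by
  induction k with
  | zero => norm_num [fejer]
  | succ k ih =>
    have h := pow_succ_mul_geom_sum_inv hz k
    have h' := pow_succ_mul_geom_sum_inv (inv_ne_zero hz) k
    rw [inv_inv] at h'
    have hz1 : z ^ (k + 1) * z⁻¹ ^ (k + 1) = 1 := by rw [← mul_pow, mul_inv_cancel₀ hz, one_pow]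
    have hS := geom_sum_succ (x := z) (n := k + 1)
    have hS' := geom_sum_succ (x := z⁻¹) (n := k + 1)
    have hA := sum_range_succ (fun n => z ^ n) (k + 1)
    have hA' := sum_range_succ (fun n => z⁻¹ ^ n) (k + 1)
    rw [fejer_succ, fejer_succ, hA, hA']
    linear_combination ih + h + h' + hz1 - hS - hS' + hA + hA'

lemma re_fejer_nonneg_of_norm_eq_one {z : ℂ} (hz : ‖z‖ = 1) (k : ℕ) : 0 ≤ (fejer k z).re := by
  have hz0 : z ≠ 0 := norm_ne_zero_iff.1 (by rw [hz]; exact one_ne_zero)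
  have hconj : conj z = z⁻¹ := by
    rw [Complex.inv_def, normSq_eq_norm_sq, hz]
    simp
  have key : (normSq (∑ n ∈ range (k + 1), z ^ n) : ℂ) = ((2 * (fejer k z).re : ℝ) : ℂ) := by
    rw [← add_conj, conj_fejer, hconj, ← geom_sum_mul_geom_sum_inv hz0, ← mul_conj, map_sum]
    simp [hconj]
  have : normSq (∑ n ∈ range (k + 1), z ^ n) = 2 * (fejer k z).re := by exact_mod_cast key
  linarith [normSq_nonneg (∑ n ∈ range (k + 1), z ^ n)]

-- Minimum principle for `Re f`, via the maximum modulus principle for `exp (-f)`.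
theorem re_pos_of_re_nonneg_on_sphere {f : ℂ → ℂ} {c : ℂ} {r : ℝ}
    (hf : DiffContOnCl ℂ f (ball c r)) (hsphere : ∀ w ∈ sphere c r, 0 ≤ (f w).re)
    (hc : 0 < (f c).re) {z : ℂ} (hz : z ∈ ball c r) : 0 < (f z).re := by
  have hr : 0 < r := pos_of_mem_ball hz
  set g : ℂ → ℂ := fun w => exp (-f w)
  have hg : DiffContOnCl ℂ g (ball c r) := differentiable_exp.comp_diffContOnCl hf.neg
  have hnorm (w : ℂ) : ‖g w‖ = Real.exp (-(f w).re) := by simp [g, norm_exp]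
  have hle : ∀ w ∈ closure (ball c r), ‖g w‖ ≤ 1 := by
    refine fun w hw => norm_le_of_forall_mem_frontier_norm_le isBounded_ball hg (fun w hw => ?_) hw
    rw [frontier_ball c hr.ne'] at hw
    simpa [hnorm] using hsphere w hw
  by_contra! hzre
  have hmax : IsMaxOn (norm ∘ g) (ball c r) z := fun w hw =>
    (hle w (subset_closure hw)).trans (by simpa [hnorm] using hzre)
  have hgc : g c = g z := eqOn_of_isPreconnected_of_isMaxOn_norm (convex_ball c r).isPreconnected
    isOpen_ball hg.differentiableOn hz hmax (mem_ball_self hr)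
  have := congrArg norm hgc
  rw [hnorm, hnorm, Real.exp_eq_exp] at this
  linarith

lemma re_fejer_pos {z : ℂ} (hz : ‖z‖ < 1) (k : ℕ) : 0 < (fejer k z).re := by
  refine re_pos_of_re_nonneg_on_sphere (differentiable_fejer k).diffContOnCl
    (fun w hw => re_fejer_nonneg_of_norm_eq_one (mem_sphere_zero_iff_norm.1 hw) k) ?_
    (mem_ball_zero_iff.2 hz)
  rw [fejer_zero_right, show ((k : ℂ) + 1) / 2 = ((k + 1) / 2 : ℝ) by push_cast; ring, ofReal_re]
  positivity

theorem Antitone.tendsto_nat_mul_of_summable {d : ℕ → ℝ} (hd : Antitone d) (hs : Summable d) :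
    Tendsto (fun n : ℕ => n * d n) atTop (𝓝 0) := by
  have hd0 : ∀ n, 0 ≤ d n := hd.le_of_tendsto hs.tendsto_atTop_zero
  have hbound (n : ℕ) : n * d n ≤ 2 * (∑ k ∈ range n, d k - ∑ k ∈ range (n / 2), d k) := by
    rw [← sum_Ico_eq_sub _ (Nat.div_le_self n 2)]
    have hsum := card_nsmul_le_sum (Ico (n / 2) n) d (d n) fun k hk => hd (mem_Ico.1 hk).2.le
    rw [Nat.card_Ico, nsmul_eq_mul] at hsum
    have hn : (n : ℝ) ≤ 2 * ((n - n / 2 : ℕ) : ℝ) := by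
      exact_mod_cast (by omega : n ≤ 2 * (n - n / 2))
    nlinarith [hd0 n]
  have hpartial := hs.hasSum.tendsto_sum_nat
  have hlim := (hpartial.sub (hpartial.comp (Nat.tendsto_div_const_atTop two_ne_zero))).const_mul 2
  rw [sub_self, mul_zero] at hlim
  exact squeeze_zero (fun n => mul_nonneg n.cast_nonneg (hd0 n)) hbound hlim

section ConvexNull

variable {c : ℕ → ℝ}

lemma antitone_sub_succ_of_convex (hconv : ∀ n, c (n + 1) - c (n + 2) ≤ c n - c (n + 1)) :
    Antitone fun n => c n - c (n + 1) :=
  antitone_nat_of_succ_le hconv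

lemma sub_succ_nonneg_of_convex (hnull : Tendsto c atTop (𝓝 0))
    (hconv : ∀ n, c (n + 1) - c (n + 2) ≤ c n - c (n + 1)) (n : ℕ) : 0 ≤ c n - c (n + 1) :=
  (antitone_sub_succ_of_convex hconv).le_of_tendsto
    (by simpa using hnull.sub (hnull.comp (tendsto_add_atTop_nat 1))) n

lemma antitone_of_convex (hnull : Tendsto c atTop (𝓝 0))
    (hconv : ∀ n, c (n + 1) - c (n + 2) ≤ c n - c (n + 1)) : Antitone c :=
  antitone_nat_of_succ_le fun n => sub_nonneg.1 (sub_succ_nonneg_of_convex hnull hconv n)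

lemma tendsto_nat_mul_sub_succ_of_convex (hnull : Tendsto c atTop (𝓝 0))
    (hconv : ∀ n, c (n + 1) - c (n + 2) ≤ c n - c (n + 1)) :
    Tendsto (fun n : ℕ => n * (c n - c (n + 1))) atTop (𝓝 0) := by
  refine (antitone_sub_succ_of_convex hconv).tendsto_nat_mul_of_summable
    (summable_of_sum_range_le (c := c 0) (sub_succ_nonneg_of_convex hnull hconv) fun n => ?_)
  rw [sum_range_sub']
  linarith [(antitone_of_convex hnull hconv).le_of_tendsto hnull n]

end ConvexNull

lemma sum_range_succ_mul_fejer (c : ℕ → ℂ) (z : ℂ) (N : ℕ) :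
    ∑ k ∈ range (N + 1), (c k - 2 * c (k + 1) + c (k + 2)) * fejer k z =
      c 0 / 2 + ∑ n ∈ range N, c (n + 1) * z ^ (n + 1)
        - c (N + 1) * (∑ n ∈ range (N + 1), z ^ n - 1 / 2)
        - (c (N + 1) - c (N + 2)) * fejer N z := by
  induction N with
  | zero =>
    simp only [fejer, zero_add, range_one, sum_singleton, pow_zero, range_zero, sum_empty]
    ring
  | succ N ih =>
    rw [sum_range_succ, ih, sum_range_succ (fun n => c (n + 1) * z ^ (n + 1)) N, fejer_succ,
      sum_range_succ (fun n => z ^ n) (N + 1)]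
    ring

theorem tendsto_sum_mul_fejer {c : ℕ → ℝ} (hnull : Tendsto c atTop (𝓝 0))
    (hconv : ∀ n, c (n + 1) - c (n + 2) ≤ c n - c (n + 1)) {z : ℂ} (hz : ‖z‖ < 1) {W : ℂ}
    (hW : HasSum (fun n => (c (n + 1) : ℂ) * z ^ (n + 1)) (W - c 0 / 2)) :
    Tendsto (fun N => ∑ k ∈ range N, ((c k - 2 * c (k + 1) + c (k + 2) : ℝ) : ℂ) * fejer k z)
      atTop (𝓝 W) := by
  rw [← tendsto_add_atTop_iff_nat 1]
  have hpartial : Tendsto (fun N => c 0 / 2 + ∑ n ∈ range N, (c (n + 1) : ℂ) * z ^ (n + 1))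
      atTop (𝓝 W) := by
    simpa using hW.tendsto_sum_nat.const_add ((c 0 : ℂ) / 2)
  have hgeom : Tendsto (fun N => ∑ n ∈ range (N + 1), z ^ n - 1 / 2) atTop
      (𝓝 ((1 - z)⁻¹ - 1 / 2)) :=
    ((hasSum_geometric_of_norm_lt_one hz).tendsto_sum_nat.comp
      (tendsto_add_atTop_nat 1)).sub_const _
  have hc : Tendsto (fun N => (c (N + 1) : ℂ)) atTop (𝓝 0) := by
    rw [← ofReal_zero, tendsto_ofReal_iff]
    exact hnull.comp (tendsto_add_atTop_nat 1)
  have hboundary : Tendsto (fun N => (c (N + 1) : ℂ) * (∑ n ∈ range (N + 1), z ^ n - 1 / 2))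
      atTop (𝓝 0) := by
    simpa using hc.mul hgeom
  have hcesaro : Tendsto (fun N : ℕ => (((N + 1 : ℕ) : ℝ)⁻¹ : ℝ) • fejer N z) atTop
      (𝓝 ((1 - z)⁻¹ - 1 / 2)) :=
    hgeom.cesaro_smul.comp (tendsto_add_atTop_nat 1)
  have hmul : Tendsto (fun N : ℕ => ((((N + 1 : ℕ) : ℝ) * (c (N + 1) - c (N + 2)) : ℝ) : ℂ))
      atTop (𝓝 0) := by
    rw [← ofReal_zero, tendsto_ofReal_iff]
    exact (tendsto_nat_mul_sub_succ_of_convex hnull hconv).comp (tendsto_add_atTop_nat 1)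
  have hboundary' : Tendsto (fun N => ((c (N + 1) - c (N + 2) : ℝ) : ℂ) * fejer N z)
      atTop (𝓝 0) := by
    have h := hmul.mul hcesaro
    rw [zero_mul] at h
    refine h.congr fun N => ?_
    rw [real_smul]
    push_cast
    field_simp
  have h := (hpartial.sub hboundary).sub hboundary'
  rw [sub_zero, sub_zero] at h
  refine h.congr fun N => ?_
  push_cast
  exact (sum_range_succ_mul_fejer (fun n => (c n : ℂ)) z N).symm

lemma exists_secondDiff_pos_of_convex {c : ℕ → ℝ} (hnull : Tendsto c atTop (𝓝 0))
    (hconv : ∀ n, c (n + 1) - c (n + 2) ≤ c n - c (n + 1)) (hc0 : c 0 ≠ 0) :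
    ∃ k, 0 < c k - 2 * c (k + 1) + c (k + 2) := by
  by_contra! h
  have he (k : ℕ) : c k - 2 * c (k + 1) + c (k + 2) = 0 :=
    le_antisymm (h k) (by linarith [hconv k])
  -- At `z = 0` the partial sums `∑ eₖ fejer k 0` vanish but must tend to `c 0 / 2`.
  have h0 := tendsto_sum_mul_fejer hnull hconv (z := 0) (by simp) (W := c 0 / 2) (by simp)
  simp only [he, ofReal_zero, zero_mul, sum_const_zero] at h0
  exact hc0 (by simpa using tendsto_nhds_unique h0 tendsto_const_nhds)

lemma re_pos_of_tendsto_sum {a : ℕ → ℂ} {W : ℂ}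
    (h : Tendsto (fun N => ∑ k ∈ range N, a k) atTop (𝓝 W))
    (ha : ∀ k, 0 ≤ (a k).re) {K : ℕ} (hK : 0 < (a K).re) : 0 < W.re := by
  have hre : Tendsto (fun N => ∑ k ∈ range N, (a k).re) atTop (𝓝 W.re) := by
    simpa [Function.comp_def, re_sum] using (continuous_re.tendsto W).comp h
  have hmono : Monotone fun N => ∑ k ∈ range N, (a k).re :=
    monotone_nat_of_le_succ fun N => by rw [sum_range_succ]; linarith [ha N]
  calc 0 < (a K).re := hK
    _ ≤ ∑ k ∈ range (K + 1), (a k).re :=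
      single_le_sum (fun k _ => ha k) (self_mem_range_succ K)
    _ ≤ W.re := hmono.ge_of_tendsto hre _

theorem HasSum.one_sub_mul_pow {R : Type*} [CommRing R] [TopologicalSpace R] [IsTopologicalRing R]
    {s : ℕ → R} {z S : R} (h : HasSum (fun n => s n * z ^ n) S) :
    HasSum (fun n => (s (n + 1) - s n) * z ^ (n + 1)) ((1 - z) * S - s 0) := by
  have hshift := (hasSum_nat_add_iff' 1).2 h
  rw [sum_range_one, pow_zero, mul_one] at hshift
  rw [show (1 - z) * S - s 0 = S - s 0 - z * S by ring]
  exact (hshift.sub (h.mul_left z)).congr_fun fun n => by ring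

lemma norm_mul_pow_le {B : ℕ → ℂ} {M : ℝ} (hB : ∀ n, ‖B n‖ ≤ M * (n + 1)) {w : ℂ} {r : ℝ}
    (hw : ‖w‖ ≤ r) (n : ℕ) : ‖B n * w ^ n‖ ≤ M * ((n + 1) * r ^ n) := by
  rw [norm_mul, norm_pow, ← mul_assoc]
  exact mul_le_mul (hB n) (pow_le_pow_left₀ (norm_nonneg _) hw n) (by positivity)
    ((norm_nonneg _).trans (hB n))

lemma summable_mul_succ_mul_geometric (M : ℝ) {r : ℝ} (hr : ‖r‖ < 1) :
    Summable fun n : ℕ => M * ((n + 1) * r ^ n) := by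
  have h1 := summable_pow_mul_geometric_of_norm_lt_one 1 hr
  simp only [pow_one] at h1
  simpa [add_mul] using (h1.add (summable_geometric_of_norm_lt_one hr)).mul_left M

lemma summable_mul_pow_of_norm_le {B : ℕ → ℂ} {M : ℝ} (hB : ∀ n, ‖B n‖ ≤ M * (n + 1)) {z : ℂ}
    (hz : ‖z‖ < 1) : Summable fun n => B n * z ^ n :=
  .of_norm_bounded (summable_mul_succ_mul_geometric M (r := ‖z‖) (by rwa [norm_norm]))
    (norm_mul_pow_le hB le_rfl)

theorem hasDerivAt_tsum_div_succ_mul_pow {B : ℕ → ℂ} {M : ℝ} (hB : ∀ n, ‖B n‖ ≤ M * (n + 1))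
    {z : ℂ} (hz : ‖z‖ < 1) :
    HasDerivAt (fun w => ∑' n, B n / (n + 1) * w ^ (n + 1)) (∑' n, B n * z ^ n) z := by
  obtain ⟨r, hzr, hr1⟩ := exists_between hz
  have hr : ‖r‖ < 1 := by
    rwa [Real.norm_of_nonneg ((norm_nonneg z).trans hzr.le)]
  refine hasDerivAt_tsum_of_isPreconnected (g := fun n w => B n / (n + 1) * w ^ (n + 1))
    (g' := fun n w => B n * w ^ n) (summable_mul_succ_mul_geometric M hr) isOpen_ball
    (convex_ball (0 : ℂ) r).isPreconnected
    (fun n w _ => ?_) (fun n w hw => ?_) (mem_ball_self ((norm_nonneg z).trans_lt hzr))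
    (by simp) (mem_ball_zero_iff.2 hzr)
  · have h := (hasDerivAt_pow (n + 1) w).const_mul (B n / (n + 1))
    rwa [Nat.add_sub_cancel, Nat.cast_add_one, ← mul_assoc,
      div_mul_cancel₀ _ (Nat.cast_add_one_ne_zero n)] at h
  · exact norm_mul_pow_le hB (mem_ball_zero_iff.1 hw).le n

lemma norm_one_add_sum_Icc_le {c : ℕ → ℝ} (hnull : Tendsto c atTop (𝓝 0))
    (hconv : ∀ n, c (n + 1) - c (n + 2) ≤ c n - c (n + 1)) (n : ℕ) :
    ‖1 + ∑ j ∈ Icc 1 n, (c j : ℂ)‖ ≤ (1 + c 0) * (n + 1) := by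
  have hanti := antitone_of_convex hnull hconv
  have hnonneg : ∀ j, 0 ≤ c j := hanti.le_of_tendsto hnull
  calc ‖1 + ∑ j ∈ Icc 1 n, (c j : ℂ)‖ ≤ 1 + ∑ j ∈ Icc 1 n, ‖(c j : ℂ)‖ :=
        (norm_add_le _ _).trans (by rw [norm_one]; gcongr; exact norm_sum_le _ _)
    _ ≤ 1 + ∑ j ∈ Icc 1 n, c 0 := by
        gcongr with j
        rw [norm_real, Real.norm_of_nonneg (hnonneg j)]
        exact hanti (Nat.zero_le j)
    _ ≤ (1 + c 0) * (n + 1) := by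
        simp only [sum_const, Nat.card_Icc, add_tsub_cancel_right, nsmul_eq_mul]
        nlinarith [hnonneg 0]

theorem stmt_5_general (c : ℕ → ℝ) (F : ℂ → ℂ)
    (hnull : Tendsto c atTop (nhds 0))
    (hconv : ∀ n, c (n + 1) - c (n + 2) ≤ c n - c (n + 1) ∧ 0 ≤ c (n + 1) - c (n + 2))
    (hc0 : c 0 = 2)
    (hF : ∀ z ∈ ball (0 : ℂ) 1,
      HasSum (fun n : ℕ =>
        ((1 + (∑ j ∈ Finset.Icc 1 (n + 1), (c j : ℂ))) / ((n : ℂ) + 2)) * z ^ (n + 2))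
        (F z - z)) :
    ∀ z ∈ ball (0 : ℂ) 1, 0 < ((1 - z) * deriv F z).re := by
  intro z hz
  have hzn : ‖z‖ < 1 := mem_ball_zero_iff.1 hz
  have hconvex (n : ℕ) : c (n + 1) - c (n + 2) ≤ c n - c (n + 1) := (hconv n).1
  set B : ℕ → ℂ := fun n => 1 + ∑ j ∈ Icc 1 n, (c j : ℂ)
  have hB := norm_one_add_sum_Icc_le hnull hconvex
  have hFsum : ∀ w ∈ ball (0 : ℂ) 1, HasSum (fun n => B n / (n + 1) * w ^ (n + 1)) (F w) := by
    intro w hw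
    rw [← hasSum_nat_add_iff' 1, sum_range_one,
      show B 0 / ((0 : ℕ) + 1) * w ^ (0 + 1) = w by simp [B]]
    exact (hF w hw).congr_fun fun n => by simp only [B]; push_cast; ring
  have hderiv : deriv F z = ∑' n, B n * z ^ n :=
    ((hasDerivAt_tsum_div_succ_mul_pow hB hzn).congr_of_eventuallyEq
      (eventually_of_mem (isOpen_ball.mem_nhds hz) fun w hw => (hFsum w hw).tsum_eq.symm)).deriv
  have hW : HasSum (fun n => (c (n + 1) : ℂ) * z ^ (n + 1)) ((1 - z) * deriv F z - c 0 / 2) := by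
    have h := (summable_mul_pow_of_norm_le hB hzn).hasSum.one_sub_mul_pow
    simp only [sum_Icc_succ_top (Nat.le_add_left 1 _)] at h
    simpa [hderiv, hc0] using h
  obtain ⟨K, hK⟩ := exists_secondDiff_pos_of_convex hnull hconvex (by rw [hc0]; exact two_ne_zero)
  refine re_pos_of_tendsto_sum (tendsto_sum_mul_fejer hnull hconvex hzn hW) (fun k => ?_)
    (K := K) ?_
  · rw [re_ofReal_mul]
    exact mul_nonneg (by linarith [hconvex k]) (re_fejer_pos hzn k).le
  · rw [re_ofReal_mul]
    exact mul_pos hK (re_fejer_pos hzn K)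

/-- If `{c_n}` is a convex null sequence with `c₀ = 2` and
`F(z) = z + ∑_{n≥2} (1/n)(1 + ∑_{j=1}^{n-1} c_j) z^n`, then `Re((1-z) F'(z)) > 0` on the disk. -/
theorem stmt_5 (c : ℕ → ℝ) (F : ℂ → ℂ)
    (hnn : ∀ n, 0 ≤ c n)
    (hnull : Tendsto c atTop (nhds 0))
    (hconv : ∀ n, c (n + 1) - c (n + 2) ≤ c n - c (n + 1) ∧ 0 ≤ c (n + 1) - c (n + 2))
    (hc0 : c 0 = 2)
    (hF : ∀ z ∈ ball (0 : ℂ) 1,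
      HasSum (fun n : ℕ =>
        ((1 + (∑ j ∈ Finset.Icc 1 (n + 1), (c j : ℂ))) / ((n : ℂ) + 2)) * z ^ (n + 2))
        (F z - z)) :
    ∀ z ∈ ball (0 : ℂ) 1, 0 < ((1 - z) * deriv F z).re :=
  stmt_5_general c F hnull hconv hc0 hF
end

section
/- The coefficients a_n = 1/n^2 (n ≥ 2, with a_1 = 1) satisfy Σ_{n≥2} { n|(n+1)a_n - (n-1)a_{n-1}| + (n-1)|n a_n - (n-2)a_{n-1}| } ≤ 2. -/
/-!
With `aₙ = 1/n²` (which holds for `n = 1` as well), for `k ≥ 2` one computes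
`(k+1)aₖ - (k-1)aₖ₋₁ = -1/(k²(k-1))` and `k aₖ - (k-2)aₖ₋₁ = 1/(k(k-1)²)`,
so the `k`-th summand is `2/(k(k-1)) = 2(1/(k-1) - 1/k)` and the series telescopes to exactly `2`.
-/

open Filter Topology

theorem Antitone.hasSum_sub_succ {f : ℕ → ℝ} {l : ℝ} (hf : Antitone f)
    (hl : Tendsto f atTop (𝓝 l)) : HasSum (fun n => f n - f (n + 1)) (f 0 - l) := by
  refine (hasSum_iff_tendsto_nat_of_nonneg (fun n => sub_nonneg.2 (hf n.le_succ)) _).2 ?_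
  simp only [Finset.sum_range_sub']
  exact hl.const_sub _

theorem hasSum_one_div_add_one_sub_succ :
    HasSum (fun n : ℕ => 1 / ((n : ℝ) + 1) - 1 / ((n : ℝ) + 2)) 1 := by
  have hf : Antitone fun n : ℕ => 1 / ((n : ℝ) + 1) := fun m n hmn => by
    dsimp only
    gcongr
  simpa [add_assoc, one_add_one_eq_two] using
    hf.hasSum_sub_succ tendsto_one_div_add_atTop_nhds_zero_nat

theorem inv_sq_summand_eq {k : ℝ} (hk : 1 < k) :
    k * |(k + 1) * (1 / k ^ 2) - (k - 1) * (1 / (k - 1) ^ 2)|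
      + (k - 1) * |k * (1 / k ^ 2) - (k - 2) * (1 / (k - 1) ^ 2)|
      = 2 * (1 / (k - 1) - 1 / k) := by
  have hk0 : 0 < k := by linarith
  have hk1 : 0 < k - 1 := by linarith
  have first_diff : (k + 1) * (1 / k ^ 2) - (k - 1) * (1 / (k - 1) ^ 2)
      = -(1 / (k ^ 2 * (k - 1))) := by
    field_simp
    ring
  have second_diff : k * (1 / k ^ 2) - (k - 2) * (1 / (k - 1) ^ 2)
      = 1 / (k * (k - 1) ^ 2) := by
    field_simp
    ring
  rw [first_diff, second_diff, abs_neg, abs_of_pos (by positivity), abs_of_pos (by positivity)]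
  field_simp
  ring

/-- The coefficients `a 1 = 1`, `a n = 1/n²` (`n ≥ 2`) satisfy
`∑_{n≥2} { n|(n+1)aₙ - (n-1)aₙ₋₁| + (n-1)|n aₙ - (n-2)aₙ₋₁| } ≤ 2`. -/
theorem stmt_16 (a : ℕ → ℝ) (ha1 : a 1 = 1)
    (ha : ∀ n : ℕ, 2 ≤ n → a n = 1 / (n : ℝ) ^ 2) :
    Summable (fun n : ℕ =>
      ((n : ℝ) + 2) * |((n : ℝ) + 3) * a (n + 2) - ((n : ℝ) + 1) * a (n + 1)|
        + ((n : ℝ) + 1) * |((n : ℝ) + 2) * a (n + 2) - (n : ℝ) * a (n + 1)|)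
    ∧ (∑' n : ℕ,
      (((n : ℝ) + 2) * |((n : ℝ) + 3) * a (n + 2) - ((n : ℝ) + 1) * a (n + 1)|
        + ((n : ℝ) + 1) * |((n : ℝ) + 2) * a (n + 2) - (n : ℝ) * a (n + 1)|)) ≤ 2 := by
  have ha_of_one_le : ∀ n : ℕ, 1 ≤ n → a n = 1 / (n : ℝ) ^ 2 := by
    intro n hn
    rcases hn.eq_or_lt with rfl | hn
    · simp [ha1]
    · exact ha n hn
  have summand_eq : ∀ n : ℕ,
      ((n : ℝ) + 2) * |((n : ℝ) + 3) * a (n + 2) - ((n : ℝ) + 1) * a (n + 1)|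
        + ((n : ℝ) + 1) * |((n : ℝ) + 2) * a (n + 2) - (n : ℝ) * a (n + 1)|
      = 2 * (1 / ((n : ℝ) + 1) - 1 / ((n : ℝ) + 2)) := by
    intro n
    have h := inv_sq_summand_eq (k := (n : ℝ) + 2) (by linarith [n.cast_nonneg (α := ℝ)])
    rw [show (n : ℝ) + 2 + 1 = n + 3 by ring, show (n : ℝ) + 2 - 1 = n + 1 by ring,
      show (n : ℝ) + 2 - 2 = n by ring] at h
    rw [ha_of_one_le (n + 2) (by omega), ha_of_one_le (n + 1) (by omega)]
    push_cast
    exact h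
  have hsum := hasSum_one_div_add_one_sub_succ.mul_left 2
  rw [mul_one] at hsum
  simp only [summand_eq]
  exact ⟨hsum.summable, hsum.tsum_eq.le⟩
end
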